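/- arXiv:2510.08860 — 2 statements merged into one kernel-verified Lean document; each statement's English description precedes it below -/
import Mathlib

section
/- Let κ ≤ λ < μ be infinite cardinals and suppose there is no slim (κ,λ)-family of cardinality λ⁺. Then every slim (κ,μ)-family F is also a slim (λ⁺,μ)-family; that is, |F↾y| ≤ λ for every y ⊆ μ with |y| ≤ λ. -/
/-!
If some `y` with `|y| ≤ λ` had more than `λ` traces `F↾y`, pull `F` back to `y`, keep `λ⁺` of
the resulting sets and copy them into `λ` along an injection `y ↪ λ`. Slimness survives pulling
back along any map, passing to subfamilies and pushing forward along injections, so this is a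
slim `(κ, λ)`-family of size `λ⁺`.
-/

open Cardinal

universe u

def SlimFamily (κ : Cardinal.{u}) {L : Type u} (F : Set (Set L)) : Prop :=
  ∀ x : Set L, #x < κ → #((fun A => A ∩ x) '' F) < κ

namespace SlimFamily

variable {κ : Cardinal.{u}} {L L' : Type u} {F : Set (Set L)}

theorem mono {G : Set (Set L)} (hF : SlimFamily κ F) (hGF : G ⊆ F) : SlimFamily κ G :=
  fun x hx => (mk_le_mk_of_subset (Set.image_mono hGF)).trans_lt (hF x hx)

theorem preimage (hF : SlimFamily κ F) (f : L' → L) : SlimFamily κ ((f ⁻¹' ·) '' F) := by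
  intro x hx
  have htrace : ∀ A : Set L, f ⁻¹' A ∩ x = f ⁻¹' (A ∩ f '' x) ∩ x := by
    intro A
    ext z
    simp only [Set.mem_inter_iff, Set.mem_preimage, Set.mem_image]
    exact ⟨fun ⟨hA, hz⟩ => ⟨⟨hA, z, hz, rfl⟩, hz⟩, fun ⟨⟨hA, _⟩, hz⟩ => ⟨hA, hz⟩⟩
  have hrestrict : (· ∩ x) '' ((f ⁻¹' ·) '' F) = (f ⁻¹' · ∩ x) '' ((· ∩ f '' x) '' F) := by
    rw [Set.image_image, Set.image_image]
    exact Set.image_congr fun A _ => htrace A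
  rw [hrestrict]
  exact mk_image_le.trans_lt (hF _ (mk_image_le.trans_lt hx))

theorem image (hF : SlimFamily κ F) {f : L → L'} (hf : Function.Injective f) :
    SlimFamily κ ((f '' ·) '' F) := by
  intro x hx
  have hrestrict : (· ∩ x) '' ((f '' ·) '' F) = (f '' ·) '' ((· ∩ f ⁻¹' x) '' F) := by
    simp only [Set.image_image, Set.image_inter_preimage]
  rw [hrestrict]
  exact mk_image_le.trans_lt (hF _ ((mk_preimage_of_injective f x hf).trans_lt hx))

theorem exists_mk_eq_of_le (hF : SlimFamily κ F) {ν : Cardinal.{u}} (hν : ν ≤ #F)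
    (hL : #L ≤ #L') : ∃ G : Set (Set L'), SlimFamily κ G ∧ #G = ν := by
  obtain ⟨G, hGF, rfl⟩ := le_mk_iff_exists_subset.mp hν
  obtain ⟨g⟩ := hL
  exact ⟨_, (hF.mono hGF).image g.injective,
    mk_image_eq_of_injOn _ _ (Set.image_injective.mpr g.injective).injOn⟩

end SlimFamily

theorem mk_image_preimage_val_eq_mk_image_inter {L : Type u} (F : Set (Set L)) (y : Set L) :
    #((fun A => (Subtype.val ⁻¹' A : Set y)) '' F) = #((· ∩ y) '' F) := by
  have hpush : (· ∩ y) '' F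
      = (Subtype.val '' ·) '' ((fun A => (Subtype.val ⁻¹' A : Set y)) '' F) := by
    simp only [Set.image_image, Subtype.image_preimage_coe, Set.inter_comm y]
  rw [hpush, mk_image_eq_of_injOn _ _ (Set.image_injective.mpr Subtype.val_injective).injOn]

theorem stmt1_general (κ lam μ : Cardinal.{u})
    (h1 : ¬ ∃ F : Set (Set lam.ord.ToType), SlimFamily κ F ∧ #F = Order.succ lam)
    (F : Set (Set μ.ord.ToType)) (hF : SlimFamily κ F) :
    ∀ y : Set μ.ord.ToType, #y ≤ lam → #((fun A => A ∩ y) '' F) ≤ lam := by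
  intro y hy
  by_contra! hlarge
  refine h1 ((hF.preimage (Subtype.val : y → _)).exists_mk_eq_of_le ?_ ?_)
  · rw [mk_image_preimage_val_eq_mk_image_inter]
    exact Order.succ_le_of_lt hlarge
  · rwa [mk_ord_toType]

/-- If `κ ≤ λ < μ` are infinite cardinals and there is no slim `(κ,λ)`-family of
cardinality `λ⁺`, then every slim `(κ,μ)`-family `F` is also a slim `(λ⁺,μ)`-family:
`|F↾y| ≤ λ` for every `y ⊆ μ` with `|y| ≤ λ`. Subsets of a cardinal `ν` are represented
as subsets of the canonical type `ν.ord.ToType`. -/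
theorem stmt1 (κ lam μ : Cardinal.{u}) (hκ : ℵ₀ ≤ κ) (hkl : κ ≤ lam) (hlm : lam < μ)
    (h1 : ¬ ∃ F : Set (Set lam.ord.ToType), SlimFamily κ F ∧ #F = Order.succ lam)
    (F : Set (Set μ.ord.ToType)) (hF : SlimFamily κ F) :
    ∀ y : Set μ.ord.ToType, #y ≤ lam → #((fun A => A ∩ y) '' F) ≤ lam :=
  stmt1_general κ lam μ h1 F hF
end

section
/- Let n < ω. If KH(ℵ_{n+1}, ℵ_ω) fails (there is no slim (ℵ_{n+1}, ℵ_ω)-family of cardinality ℵ_{ω+1}), then for every infinite A ⊆ ω and every scale (f_α : α < ℵ_{ω+1}) on ∏_{k∈A} ℵ_k, the set of ordinals α < ℵ_{ω+1} with cf(α) = ℵ_{n+1} that are not good for the scale is stationary in ℵ_{ω+1}: it meets every closed unbounded subset of ℵ_{ω+1}. -/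
open Cardinal Ordinal

universe u

/-- `f` is a member of `∏_{k ∈ A} ℵ_k`: `f k < ℵ_k` for every `k ∈ A`
(values off `A` are irrelevant). -/
def MemPiAleph (A : Set ℕ) (f : ℕ → Ordinal.{u}) : Prop :=
  ∀ k ∈ A, f k < (aleph k).ord

/-- `f <* g`: `f k < g k` for all but finitely many `k ∈ A`. -/
def LtStar (A : Set ℕ) (f g : ℕ → Ordinal.{u}) : Prop :=
  {k ∈ A | ¬ f k < g k}.Finite

/-- `(f α : α < ℵ_{ω+1})` is a scale on `∏_{k ∈ A} ℵ_k`: each `f α` is a member of the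
product, the sequence is `<*`-increasing, and it is `<*`-cofinal in the product. -/
def IsScale (A : Set ℕ) (f : Ordinal.{u} → ℕ → Ordinal.{u}) : Prop :=
  (∀ α < (aleph (omega0 + 1)).ord, MemPiAleph A (f α)) ∧
  (∀ α β : Ordinal.{u}, α < β → β < (aleph (omega0 + 1)).ord → LtStar A (f α) (f β)) ∧
  (∀ g : ℕ → Ordinal.{u}, MemPiAleph A g →
    ∃ α < (aleph (omega0 + 1)).ord, LtStar A g (f α))

/-- `α` is a good point for the scale `f`: for every `C` unbounded in `α` there are
`D ⊆ C` unbounded in `α` and `k₀ < ω` such that for all `β < η` in `D` and all `k ∈ A`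
with `k ≥ k₀` we have `f β k < f η k`. -/
def IsGoodPoint (A : Set ℕ) (f : Ordinal.{u} → ℕ → Ordinal.{u}) (α : Ordinal.{u}) : Prop :=
  ∀ C : Set Ordinal.{u}, C ⊆ Set.Iio α → (∀ β < α, ∃ γ ∈ C, β ≤ γ) →
    ∃ D ⊆ C, (∀ β < α, ∃ γ ∈ D, β ≤ γ) ∧
      ∃ k₀ : ℕ, ∀ β ∈ D, ∀ η ∈ D, β < η → ∀ k ∈ A, k₀ ≤ k → f β k < f η k

/-- `C` is a closed unbounded subset of `θ`: `C ⊆ θ`, `C` is unbounded in `θ`, and `C`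
contains the supremum of each of its bounded nonempty subsets without a maximum. -/
def IsClubBelow (θ : Ordinal.{u}) (C : Set Ordinal.{u}) : Prop :=
  C ⊆ Set.Iio θ ∧ (∀ β < θ, ∃ γ ∈ C, β ≤ γ) ∧
  ∀ S : Set Ordinal.{u}, S ⊆ C → S.Nonempty → sSup S < θ → sSup S ∉ S → sSup S ∈ C

/-!
Fix an injection `ω × ℵ_ω → ℵ_ω` and code `f α` as the set `b α ⊆ ℵ_ω` of codes of the pairs
`(k, f α k)`, `k ∈ A`. Since the scale is `<*`-increasing these sets are pairwise distinct, so
`F = {b α : α ∈ C}` has size `ℵ_{ω+1}`; we show that `F` is slim for `κ = ℵ_{n+1}` when every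
`α ∈ C` of cofinality `κ` is good.
If some `x` of size `< κ` had `κ` many traces `b α ∩ x`, pick an increasing `κ`-sequence of such
`α ∈ C`; its supremum `δ` lies in `C` and has cofinality `κ`, so it is good: some cofinal `D` of
size `κ` is strictly increasing in every coordinate `k ≥ k₀`. Then for each `k ≥ k₀` at most `|x|`
members of `D` put their `k`-th code into `x`, and the remaining ones are determined by their
traces, which are finite subsets of `x`; so `|D| ≤ max ℵ₀ |x| < κ`, a contradiction.
-/

open Function Set

theorem mk_finset_le_max (α : Type u) : #(Finset α) ≤ max ℵ₀ #α := by
  cases finite_or_infinite α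
  · exact le_max_of_le_left mk_le_aleph0
  · exact (mk_finset_of_infinite α).le.trans (le_max_right _ _)

theorem mk_le_max_of_injective_inter_image {ι L : Type u} {A : Set ℕ} {g : ι → ℕ → L}
    {x : Set L} (k₀ : ℕ) (hg : ∀ k ∈ A, k₀ ≤ k → Injective (g · k))
    (htrace : Injective fun i => g i '' A ∩ x) : #ι ≤ max ℵ₀ #x := by
  set hit : ULift.{u} ℕ → Set ι := fun k => {i | k.down ∈ A ∧ k₀ ≤ k.down ∧ g i k.down ∈ x}
  set miss : Set ι := {i | ∀ k ∈ A, k₀ ≤ k → g i k ∉ x}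
  have hcover : (univ : Set ι) ⊆ (⋃ k, hit k) ∪ miss := by
    intro i _
    by_cases h : i ∈ miss
    · exact Or.inr h
    · obtain ⟨k, hkA, hk, hx⟩ : ∃ k ∈ A, k₀ ≤ k ∧ g i k ∈ x := by simpa [miss] using h
      exact Or.inl (mem_iUnion.2 ⟨⟨k⟩, hkA, hk, hx⟩)
  have hhit : ∀ k, #(hit k) ≤ #x := fun k =>
    mk_le_of_injective (f := fun i : hit k => (⟨g i k.down, i.2.2.2⟩ : x))
      fun i j h => Subtype.ext (hg _ i.2.1 i.2.2.1 (congrArg Subtype.val h))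
  -- on `miss` the trace on `x` only sees the finitely many coordinates below `k₀`
  have hmiss : #miss ≤ #(Finset x) := by
    rw [mk_congr OrderIso.finsetSetFinite.toEquiv]
    refine mk_le_of_injective (f := fun i : miss => ⟨Subtype.val ⁻¹' (g i '' A), ?_⟩) ?_
    · refine (((finite_Iio k₀).image (g i)).preimage Subtype.val_injective.injOn).subset ?_
      rintro ⟨_, hy⟩ ⟨k, hkA, rfl⟩
      exact ⟨k, lt_of_not_ge fun hk => i.2 k hkA hk hy, rfl⟩
    · intro i j h
      have h' := Subtype.preimage_coe_eq_preimage_coe_iff.1 (congrArg Subtype.val h)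
      exact Subtype.ext (htrace (by simpa only [inter_comm x] using h'))
  calc #ι = #(univ : Set ι) := mk_univ.symm
    _ ≤ #(⋃ k, hit k) + #miss := (mk_le_mk_of_subset hcover).trans (mk_union_le _ _)
    _ ≤ ℵ₀ * #x + max ℵ₀ #x := by
      gcongr
      · refine (mk_iUnion_le hit).trans (mul_le_mul' ?_ (ciSup_le' hhit))
        simp
      · exact hmiss.trans (mk_finset_le_max x)
    _ ≤ max ℵ₀ #x + max ℵ₀ #x := by gcongr; exact mul_le_max_of_aleph0_le_left le_rfl
    _ = max ℵ₀ #x := add_eq_self (le_max_left _ _)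

theorem exists_strictMono_comp_of_injective {ι : Type u} {φ : ι → Ordinal.{u}} (hφ : Injective φ)
    {κ : Cardinal.{u}} (hκ : κ ≤ #ι) : ∃ e : κ.ord.ToType → ι, StrictMono (φ ∘ e) := by
  let r : ι → ι → Prop := fun a b => φ a < φ b
  have : IsWellOrder ι r := (RelEmbedding.preimage ⟨φ, hφ⟩ (· < ·)).isWellOrder
  have hle : typeLT κ.ord.ToType ≤ type r := by
    rw [type_toType, ord_le, card_type]
    exact hκ
  obtain ⟨e⟩ := type_le_iff'.1 hle
  exact ⟨e, fun a b h => e.map_rel_iff.2 h⟩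

theorem StrictMono.lt_iSup_of_noMaxOrder {γ : Type u} [Preorder γ] [NoMaxOrder γ]
    {q : γ → Ordinal.{u}} (hq : StrictMono q) (i : γ) : q i < ⨆ j, q j :=
  let ⟨j, hij⟩ := exists_gt i
  (hq hij).trans_le (Ordinal.le_iSup q j)

theorem IsClubBelow.iSup_mem {θ : Ordinal.{u}} {C : Set Ordinal.{u}} (hC : IsClubBelow θ C)
    {γ : Type u} [Preorder γ] [Nonempty γ] [NoMaxOrder γ] {q : γ → Ordinal.{u}}
    (hq : StrictMono q) (hqC : ∀ i, q i ∈ C) (hγ : #γ < θ.cof) : ⨆ i, q i ∈ C :=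
  hC.2.2 (range q) (range_subset_iff.2 hqC) (range_nonempty q)
    (Ordinal.iSup_lt_of_lt_cof hγ fun i => hC.1 (hqC i))
    (fun ⟨i, hi⟩ => (hq.lt_iSup_of_noMaxOrder i).ne hi)

theorem IsClubBelow.mk_eq {κ : Cardinal.{u}} (hκ : κ.IsRegular) {C : Set Ordinal.{u}}
    (hC : IsClubBelow κ.ord C) : #C = Cardinal.lift.{u + 1} κ := by
  apply le_antisymm
  · simpa using mk_le_mk_of_subset hC.1
  · have hcof : Order.cof (Iio κ.ord) ≤ #{a : Iio κ.ord | a.1 ∈ C} := by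
      refine Order.cof_le fun a => ?_
      obtain ⟨γ, hγC, hγ⟩ := hC.2.1 a a.2
      exact ⟨⟨γ, hC.1 hγC⟩, hγC, hγ⟩
    rw [cof_Iio, ← lift_cof, hκ.cof_ord] at hcof
    exact hcof.trans (mk_le_of_injective (f := fun a => (⟨a.1.1, a.2⟩ : C))
      fun a b h => Subtype.ext (Subtype.ext (Subtype.mk.inj h)))

theorem slimFamily_image_of_forall_isGoodPoint {L : Type u} {κ : Cardinal.{u}}
    (hκ : κ.IsRegular) (hκ₀ : ℵ₀ < κ) {θ : Ordinal.{u}} (hκθ : κ < θ.cof)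
    {C : Set Ordinal.{u}} (hC : IsClubBelow θ C) {A : Set ℕ} {f : Ordinal.{u} → ℕ → Ordinal.{u}}
    {g : Ordinal.{u} → ℕ → L} (hg : ∀ α ∈ C, ∀ β ∈ C, ∀ k ∈ A, g α k = g β k → f α k = f β k)
    (hgood : ∀ α ∈ C, α.cof = κ → IsGoodPoint A f α) :
    SlimFamily κ ((fun α => g α '' A) '' C) := by
  intro x hx
  by_contra! hbig
  have hrep : ∀ t : (fun s => s ∩ x) '' ((fun α => g α '' A) '' C), ∃ α ∈ C, g α '' A ∩ x = t := by
    rintro ⟨_, _, ⟨α, hα, rfl⟩, rfl⟩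
    exact ⟨α, hα, rfl⟩
  choose φ hφC hφ using hrep
  have hφinj : Injective φ := fun s t h => Subtype.ext (by rw [← hφ s, ← hφ t, h])
  obtain ⟨e, he⟩ := exists_strictMono_comp_of_injective hφinj hbig
  set q := φ ∘ e
  have : NoMaxOrder κ.ord.ToType := Cardinal.noMaxOrder hκ.aleph0_le
  have : Nonempty κ.ord.ToType := nonempty_toType_iff.2 (ord_pos.2 hκ.pos).ne'
  have hδC : ⨆ i, q i ∈ C := hC.iSup_mem he (fun i => hφC _) (by rwa [mk_toType, card_ord])
  have hδcof : (⨆ i, q i).cof = κ := by rw [cof_iSup he, cof_toType, hκ.cof_ord]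
  obtain ⟨D, hDq, hDub, k₀, hk₀⟩ := hgood _ hδC hδcof (range q)
    (range_subset_iff.2 he.lt_iSup_of_noMaxOrder) fun β hβ => by
      obtain ⟨i, hi⟩ := Ordinal.lt_iSup_iff.1 hβ
      exact ⟨q i, mem_range_self i, hi.le⟩
  have hκD : κ ≤ #(q ⁻¹' D) := by
    refine ((cof_toType κ.ord).trans hκ.cof_ord).ge.trans (Order.cof_le fun i => ?_)
    obtain ⟨_, hd, hid⟩ := hDub (q i) (he.lt_iSup_of_noMaxOrder i)
    obtain ⟨j, rfl⟩ := hDq hd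
    exact ⟨j, hd, he.le_iff_le.1 hid⟩
  have hDx : #(q ⁻¹' D) ≤ max ℵ₀ #x := by
    refine mk_le_max_of_injective_inter_image (A := A) (g := fun i : q ⁻¹' D => g (q i)) k₀ ?_ ?_
    · intro k hkA hk i j hij
      by_contra hne
      rcases lt_or_gt_of_ne (he.injective.ne (Subtype.coe_ne_coe.2 hne)) with h | h
      · exact (hk₀ _ i.2 _ j.2 h k hkA hk).ne (hg _ (hφC _) _ (hφC _) k hkA hij)
      · exact (hk₀ _ j.2 _ i.2 h k hkA hk).ne' (hg _ (hφC _) _ (hφC _) k hkA hij)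
    · intro i j hij
      refine Subtype.ext (he.injective (congrArg φ (Subtype.ext ?_)))
      simpa only [q, comp_apply, hφ] using hij
  exact (hκD.trans hDx).not_gt (max_lt hκ₀ hx)

theorem exists_injOn_prod_toType {o : Ordinal.{u}} (ho : ℵ₀ ≤ o.card) :
    ∃ c : ℕ × Ordinal.{u} → o.ToType, InjOn c {p | p.2 < o} := by
  have : Infinite o.ToType := infinite_iff.2 (by rwa [mk_toType])
  obtain ⟨j⟩ : Nonempty (ℕ × o.ToType ↪ o.ToType) := by
    rw [← le_def, mk_prod, mk_nat, lift_aleph0, Cardinal.lift_uzero,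
      aleph0_mul_eq (aleph0_le_mk _)]
  refine ⟨fun p => j (p.1, if h : p.2 < o then ToType.mk ⟨p.2, h⟩ else Classical.arbitrary _), ?_⟩
  rintro ⟨k, ξ⟩ (hξ : ξ < o) ⟨k', ξ'⟩ (hξ' : ξ' < o) h
  simp only [dif_pos hξ, dif_pos hξ'] at h
  obtain ⟨rfl, h⟩ := Prod.ext_iff.1 (j.injective h)
  exact Prod.ext rfl (congrArg Subtype.val (ToType.mk.injective h))

namespace IsScale

variable {A : Set ℕ} {f : Ordinal.{u} → ℕ → Ordinal.{u}}

theorem lt_ord_aleph_omega0 (hf : IsScale A f) {α : Ordinal.{u}}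
    (hα : α < (aleph (ω + 1)).ord) {k : ℕ} (hk : k ∈ A) : f α k < (aleph ω).ord :=
  (hf.1 α hα k hk).trans_le (ord_le_ord.2 (aleph_le_aleph.2 (natCast_lt_omega0 k).le))

theorem exists_lt (hA : A.Infinite) (hf : IsScale A f) {α β : Ordinal.{u}} (hαβ : α < β)
    (hβ : β < (aleph (ω + 1)).ord) : ∃ k ∈ A, f α k < f β k := by
  obtain ⟨k, hkA, hk⟩ := (hA.sdiff (hf.2.1 α β hαβ hβ)).nonempty
  exact ⟨k, hkA, not_not.1 fun h => hk ⟨hkA, h⟩⟩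

theorem injOn_image_graph (hA : A.Infinite) (hf : IsScale A f) {L : Type*}
    {c : ℕ × Ordinal.{u} → L} (hc : InjOn c {p | p.2 < (aleph ω).ord}) :
    InjOn (fun α => (fun k => c (k, f α k)) '' A) (Iio (aleph (ω + 1)).ord) := by
  intro α hα β hβ h
  by_contra hne
  wlog hlt : α < β generalizing α β
  · exact this hβ hα h.symm (Ne.symm hne) ((not_lt.1 hlt).lt_of_ne' hne)
  obtain ⟨k, hkA, hk⟩ := hf.exists_lt hA hlt hβ
  have h : (fun k => c (k, f α k)) '' A = (fun k => c (k, f β k)) '' A := h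
  obtain ⟨k', hk'A, hk'⟩ := h ▸ mem_image_of_mem (fun k => c (k, f α k)) hkA
  obtain ⟨rfl, hff⟩ := Prod.ext_iff.1 (hc (hf.lt_ord_aleph_omega0 hβ hk'A)
    (hf.lt_ord_aleph_omega0 hα hkA) hk')
  exact hk.ne hff.symm

end IsScale

/-- If `KH(ℵ_{n+1}, ℵ_ω)` fails, then for every infinite `A ⊆ ω` and every scale on
`∏_{k ∈ A} ℵ_k`, the set of ordinals `α < ℵ_{ω+1}` of cofinality `ℵ_{n+1}` that are not
good for the scale is stationary in `ℵ_{ω+1}`: it meets every club. -/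
theorem stmt10 (n : ℕ)
    (hno : ¬ ∃ F : Set (Set (aleph omega0).ord.ToType),
      SlimFamily (aleph ((n : Ordinal.{u}) + 1)) F ∧ #F = aleph (omega0 + 1)) :
    ∀ A : Set ℕ, A.Infinite → ∀ f : Ordinal.{u} → ℕ → Ordinal.{u}, IsScale A f →
      ∀ C : Set Ordinal.{u}, IsClubBelow ((aleph (omega0 + 1)).ord) C →
        ∃ α ∈ C, α.cof = aleph ((n : Ordinal.{u}) + 1) ∧ ¬ IsGoodPoint A f α := by
  intro A hA f hf C hC
  by_contra! hgood
  obtain ⟨c, hc⟩ := exists_injOn_prod_toType (o := (aleph ω).ord) (by simp)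
  have hmem : ∀ α ∈ C, ∀ k ∈ A, (k, f α k) ∈ {p : ℕ × Ordinal | p.2 < (aleph ω).ord} :=
    fun α hα k hk => hf.lt_ord_aleph_omega0 (hC.1 hα) hk
  have hslim := slimFamily_image_of_forall_isGoodPoint (isRegular_aleph_add_one _)
    (aleph0_lt_aleph_one.trans_le (aleph_le_aleph.2 (by simp)))
    (by rw [(isRegular_aleph_add_one ω).cof_ord]; exact aleph_lt_aleph.2 (by simp)) hC
    (g := fun α k => c (k, f α k))
    (fun α hα β hβ k hk h => (Prod.ext_iff.1 (hc (hmem α hα k hk) (hmem β hβ k hk) h)).2) hgood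
  have hcard := mk_image_eq_of_injOn_lift _ C ((hf.injOn_image_graph hA hc).mono hC.1)
  rw [hC.mk_eq (isRegular_aleph_add_one ω), Cardinal.lift_id'.{u, u + 1}] at hcard
  exact hno ⟨_, hslim, lift_inj.1 hcard⟩
end
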